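/- For ε ≥ 0, ξ ≥ 0, P_max ≥ 0, the minimum over all policies of the erroneous cost is bounded by the minimum of the error-free cost plus the maximal perturbation: (min over β of P_N(ρ, β)) ≤ (min over β of P_N(fun k => ρ k + ε, β)) ≤ (min over β of P_N(ρ, β)) + ε * ξ * P_max * n; i.e., the estimation error degrades the achievable energy consumption by at most ε·ξ·P_max·n. -/

import Mathlib

/-!
Load only enters the power of an active SBS, linearly with slope `ξ * P_max ≥ 0`. So for every
fixed policy, raising all loads by `ε` raises the power by `ε * ξ * P_max` times the number of
active SBSs, which lies between `0` and `ε * ξ * P_max * n`; both bounds pass to the minimum over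
the finitely many policies.
-/

noncomputable def PN {n : ℕ} (P_H P_C P_S ξ P_max : ℝ) (ρ : Fin n → ℝ) (β : Fin n → Bool) : ℝ :=
  P_H + ∑ k, (if β k then P_C + ξ * ρ k * P_max else P_S)

open Finset

theorem ciInf_le_ciInf_add {ι α : Type*} [Finite ι] [Nonempty ι] [ConditionallyCompleteLattice α]
    [AddGroup α] [AddRightMono α] {f g : ι → α} (c : α) (h : ∀ i, g i ≤ f i + c) :
    ⨅ i, g i ≤ (⨅ i, f i) + c := by
  have hshift : (⨅ i, f i) + c = ⨅ i, f i + c :=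
    (OrderIso.addRight c).map_ciInf (Finite.bddBelow_range f)
  rw [hshift]
  exact ciInf_mono (Finite.bddBelow_range g) h

section PN

variable {n : ℕ} (P_H P_C P_S ξ P_max : ℝ)

theorem PN_mono_load {ρ ρ' : Fin n → ℝ} (hξ : 0 ≤ ξ) (hPmax : 0 ≤ P_max) (hρ : ∀ k, ρ k ≤ ρ' k)
    (β : Fin n → Bool) : PN P_H P_C P_S ξ P_max ρ β ≤ PN P_H P_C P_S ξ P_max ρ' β := by
  unfold PN
  gcongr with k
  split_ifs
  · gcongr
    exact hρ k
  · rfl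

theorem PN_add_const_load (ρ : Fin n → ℝ) (ε : ℝ) (β : Fin n → Bool) :
    PN P_H P_C P_S ξ P_max (fun k => ρ k + ε) β
      = PN P_H P_C P_S ξ P_max ρ β + ε * ξ * P_max * #{k | β k} := by
  simp only [PN, card_filter, Nat.cast_sum, Nat.cast_ite, Nat.cast_one, Nat.cast_zero, mul_sum,
    add_assoc, ← sum_add_distrib]
  congr 1
  refine sum_congr rfl fun k _ => ?_
  split_ifs <;> ring

theorem PN_add_const_load_le (ρ : Fin n → ℝ) {ε : ℝ} (hε : 0 ≤ ε) (hξ : 0 ≤ ξ)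
    (hPmax : 0 ≤ P_max) (β : Fin n → Bool) :
    PN P_H P_C P_S ξ P_max (fun k => ρ k + ε) β
      ≤ PN P_H P_C P_S ξ P_max ρ β + ε * ξ * P_max * n := by
  have hactive : (#{k | β k} : ℝ) ≤ n :=
    mod_cast (card_filter_le _ _).trans_eq (card_fin n)
  rw [PN_add_const_load]
  gcongr

end PN

/-- The estimation error degrades the achievable (minimal) energy consumption by at
most `ε * ξ * P_max * n`. -/
theorem min_power_error_bounds {n : ℕ} (P_H P_C P_S ξ P_max : ℝ)
    (ρ : Fin n → ℝ) (ε : ℝ) (hε : 0 ≤ ε) (hξ : 0 ≤ ξ) (hPmax : 0 ≤ P_max) :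
    (⨅ β : Fin n → Bool, PN P_H P_C P_S ξ P_max ρ β)
        ≤ (⨅ β : Fin n → Bool, PN P_H P_C P_S ξ P_max (fun k => ρ k + ε) β)
    ∧ (⨅ β : Fin n → Bool, PN P_H P_C P_S ξ P_max (fun k => ρ k + ε) β)
        ≤ (⨅ β : Fin n → Bool, PN P_H P_C P_S ξ P_max ρ β) + ε * ξ * P_max * (n : ℝ) :=
  ⟨ciInf_mono (Finite.bddBelow_range _)
      (PN_mono_load P_H P_C P_S ξ P_max hξ hPmax fun _ => le_add_of_nonneg_right hε),
    ciInf_le_ciInf_add _ (PN_add_const_load_le P_H P_C P_S ξ P_max ρ hε hξ hPmax)⟩
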